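/- Let n ≥ 2, let z = [z₁,…,z_{n+1}] ∈ ∂ℍⁿ_ℂ \ {[e₁],[e_{n+1}]}, and let M_z be the (n−1)×(n−1) matrix with (i,j) entry z_{i+1} z̄_{j+1} for i ≠ j and z_{n+1} z̄₁ + |z_{i+1}|² for i = j. Then M_z M_z* = |z₁|² |z_{n+1}|² · I_{n−1}; in particular the projectivization [[M_z]] lies in PU(n−1). Moreover, every point of W_z = e₁^⊥ ∩ e_{n+1}^⊥ ∩ z^⊥ is a fixed point of φ_z = [[M_z]]. -/

import Mathlib

/-!
Write `a = z_{n+1} z̄₁` and `v = (z₂, …, z_n)`, so that `M_z = a I + v v*`; isotropy of `z`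
reads `a + ā + |v|² = 0`. Hence `M_z M_z* = |a|² I + (a + ā + |v|²) v v* = |a|² I`, and
`M_z u = a u` whenever `u ⊥ v`, which is exactly the condition cutting out `W_z`. Finally
`a ≠ 0`: if `z₁ = 0` or `z_{n+1} = 0`, isotropy forces `v = 0`, so `z` is `[e_{n+1}]` or `[e₁]`.
-/

noncomputable section

open scoped ComplexConjugate
open scoped Matrix

namespace CKG

/-- The underlying vector space `ℂ^{n+1}`. -/
abbrev Vc (n : ℕ) := Fin (n + 1) → ℂ

instance projTopInst (K V : Type*) [DivisionRing K] [AddCommGroup V] [Module K V]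
    [TopologicalSpace V] : TopologicalSpace (Projectivization K V) :=
  inferInstanceAs (TopologicalSpace (Quotient (projectivizationSetoid K V)))

/-- The complex projective space `ℙⁿ_ℂ`. -/
abbrev Prj (n : ℕ) := Projectivization ℂ (Vc n)

/-- The Hermitian matrix `H` with ones at the corners `(1,n+1)`, `(n+1,1)` and the identity
in the central `(n-1) × (n-1)` block. -/
def Hmat (n : ℕ) : Matrix (Fin (n + 1)) (Fin (n + 1)) ℂ := fun i j =>
  if (i = 0 ∧ j = Fin.last n) ∨ (i = Fin.last n ∧ j = 0) ∨
      (i = j ∧ i ≠ 0 ∧ i ≠ Fin.last n) then 1 else 0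

/-- The Hermitian form of signature `(1,n)` induced by `H`. -/
def herm (n : ℕ) (v w : Vc n) : ℂ := ∑ i, ∑ j, v i * Hmat n i j * conj (w j)

/-- The projective hyperplane `p^⊥` of points orthogonal to `p`. -/
def orthHyp (n : ℕ) (p : Prj n) : Set (Prj n) := {q | herm n q.rep p.rep = 0}

/-- The projective span of a set of points of `ℙⁿ_ℂ`, as a set of points. -/
def projSpan (n : ℕ) (S : Set (Prj n)) : Set (Prj n) :=
  {r | r.rep ∈ Submodule.span ℂ (Projectivization.rep '' S)}

/-- The standard basis vector `e₁`. -/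
def e1v (n : ℕ) : Vc n := Pi.single 0 1

/-- The standard basis vector `e_{n+1}`. -/
def eN1v (n : ℕ) : Vc n := Pi.single (Fin.last n) 1

lemma e1v_ne_zero (n : ℕ) : e1v n ≠ 0 := by
  intro h; have := congrFun h 0; simp [e1v] at this

lemma eN1v_ne_zero (n : ℕ) : eN1v n ≠ 0 := by
  intro h; have := congrFun h (Fin.last n); simp [eN1v] at this

/-- The point `[e₁] ∈ ℙⁿ_ℂ`. -/
def e1pt (n : ℕ) : Prj n := Projectivization.mk ℂ (e1v n) (e1v_ne_zero n)

/-- The point `[e_{n+1}] ∈ ℙⁿ_ℂ`. -/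
def eN1pt (n : ℕ) : Prj n := Projectivization.mk ℂ (eN1v n) (eN1v_ne_zero n)

/-- The inclusion of indices `{1, …, n-1}` (numbering `e₂, …, e_n`) into `Fin (n+1)`. -/
def idx {n : ℕ} (i : Fin (n - 1)) : Fin (n + 1) := ⟨i.val + 1, by omega⟩

/-- The `(n-1) × (n-1)` matrix `M_z` with `(i,j)` entry `z_{i+1} z̄_{j+1}` for `i ≠ j` and
`z_{n+1} z̄₁ + |z_{i+1}|²` for `i = j`. -/
def Mz (n : ℕ) (z : Vc n) : Matrix (Fin (n - 1)) (Fin (n - 1)) ℂ := fun i j =>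
  (if i = j then z (Fin.last n) * conj (z 0) else 0) + z (idx i) * conj (z (idx j))

/-- The embedding `ℂ^{n-1} → ℂ^{n+1}` into the coordinates `2, …, n`
(realizing the identification of `ℙ^{n-2}_ℂ` with `Span({e₂,…,e_n})`). -/
def embedMid (n : ℕ) (u : Fin (n - 1) → ℂ) : Vc n :=
  fun i => ∑ j : Fin (n - 1), if idx j = i then u j else 0

/-- The projection `ℂ^{n+1} → ℂ^{n-1}` onto the coordinates `2, …, n`. -/
def midOf (n : ℕ) (v : Vc n) : Fin (n - 1) → ℂ := fun j => v (idx j)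

/-- The Cartan angular invariant `𝔸(x,y,w) = arg(−⟨x,y⟩⟨y,w⟩⟨w,x⟩)`. -/
def cartanArg (n : ℕ) (x y w : Vc n) : ℝ :=
  Complex.arg (-(herm n x y * herm n y w * herm n w x))

/-- The map `φ_z` of the paper, at the level of sets:
`φ_z(w) = Span((Span((Span({w,e_{n+1}}) ∩ z^⊥) ∪ {z}) ∩ e₁^⊥) ∪ {e₁}) ∩ e_{n+1}^⊥`. -/
def phiSet (n : ℕ) (z w : Prj n) : Set (Prj n) :=
  projSpan n
    ((projSpan n ((projSpan n {w, eN1pt n} ∩ orthHyp n z) ∪ {z}) ∩ orthHyp n (e1pt n))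
      ∪ {e1pt n}) ∩ orthHyp n (eN1pt n)

section RankOnePerturbation

variable {R : Type*} [CommRing R] [StarRing R] {m : Type*} [Fintype m] [DecidableEq m]

lemma smul_one_add_vecMulVec_mul_conjTranspose (a : R) (v : m → R)
    (h : a + star a + v ⬝ᵥ star v = 0) :
    (a • 1 + Matrix.vecMulVec v (star v)) * (a • 1 + Matrix.vecMulVec v (star v))ᴴ =
      (a * star a) • (1 : Matrix m m R) := by
  rw [Matrix.conjTranspose_add, Matrix.conjTranspose_smul, Matrix.conjTranspose_one,
    Matrix.conjTranspose_vecMulVec, star_star, add_mul, mul_add, mul_add,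
    Matrix.vecMulVec_mul_vecMulVec, dotProduct_comm, Matrix.vecMulVec_smul]
  simp only [Matrix.smul_mul, Matrix.mul_smul, Matrix.one_mul, Matrix.mul_one, smul_smul,
    mul_comm (star a) a]
  calc _ = (a * star a) • (1 : Matrix m m R)
        + (a + star a + v ⬝ᵥ star v) • Matrix.vecMulVec v (star v) := by
          simp only [add_smul]; abel
    _ = (a * star a) • 1 := by rw [h, zero_smul, add_zero]

lemma smul_one_add_vecMulVec_mulVec_of_dotProduct_eq_zero (a : R) (v u : m → R)
    (h : u ⬝ᵥ star v = 0) :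
    (a • 1 + Matrix.vecMulVec v (star v)) *ᵥ u = a • u := by
  rw [Matrix.add_mulVec, Matrix.smul_mulVec, Matrix.one_mulVec, Matrix.vecMulVec_mulVec,
    dotProduct_comm, h, MulOpposite.op_zero, zero_smul, add_zero]

end RankOnePerturbation

lemma inv_smul_mem_unitaryGroup {K : Type*} [Field K] [StarRing K] {m : Type*} [Fintype m]
    [DecidableEq m] {M : Matrix m m K} {a : K} (ha : a ≠ 0)
    (hM : M * Mᴴ = (a * star a) • 1) : a⁻¹ • M ∈ Matrix.unitaryGroup m K := by
  have hstar : star a ≠ 0 := star_ne_zero.mpr ha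
  rw [Matrix.mem_unitaryGroup_iff, Matrix.star_eq_conjTranspose, Matrix.conjTranspose_smul,
    Matrix.smul_mul, Matrix.mul_smul, hM, smul_smul, smul_smul, star_inv₀]
  field_simp
  simp

lemma idx_ne_zero {n : ℕ} (k : Fin (n - 1)) : idx k ≠ 0 :=
  Fin.ne_of_val_ne k.val.succ_ne_zero

lemma idx_ne_last {n : ℕ} (k : Fin (n - 1)) : idx k ≠ Fin.last n :=
  Fin.ne_of_val_ne (by have := k.isLt; simp only [idx, Fin.val_last]; omega)

lemma idx_injective {n : ℕ} : Function.Injective (idx (n := n)) :=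
  fun _ _ h => Fin.ext (Nat.succ_injective (Fin.val_eq_of_eq h))

lemma exists_idx_eq {n : ℕ} {i : Fin (n + 1)} (h0 : i ≠ 0) (hlast : i ≠ Fin.last n) :
    ∃ k : Fin (n - 1), idx k = i := by
  have h0' : i.val ≠ 0 := Fin.val_ne_iff.mpr h0
  have hlast' : i.val ≠ n := Fin.val_ne_iff.mpr hlast
  exact ⟨⟨i.val - 1, by omega⟩, Fin.ext (by simp only [idx]; omega)⟩

lemma sum_eq_first_add_last_add_sum_idx {M : Type*} [AddCommMonoid M] {n : ℕ} (hn : n ≠ 0)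
    (f : Fin (n + 1) → M) :
    ∑ i, f i = f 0 + f (Fin.last n) + ∑ k : Fin (n - 1), f (idx k) := by
  obtain ⟨m, rfl⟩ := Nat.exists_eq_succ_of_ne_zero hn
  rw [Fin.sum_univ_succ, Fin.sum_univ_castSucc, add_comm (∑ _ : Fin m, _), ← add_assoc]
  rfl

lemma Hmat_apply (n : ℕ) (i j : Fin (n + 1)) :
    Hmat n i j = if j = Equiv.swap 0 (Fin.last n) i then 1 else 0 := by
  unfold Hmat
  rw [Equiv.swap_apply_def]
  split_ifs <;> first | rfl | (exfalso; grind)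

lemma herm_eq_sum_swap (n : ℕ) (v w : Vc n) :
    herm n v w = ∑ i, v i * conj (w (Equiv.swap 0 (Fin.last n) i)) := by
  simp only [herm, Hmat_apply, mul_ite, mul_one, mul_zero, ite_mul, zero_mul,
    Finset.sum_ite_eq', Finset.mem_univ, if_true]

lemma herm_eq (n : ℕ) (hn : n ≠ 0) (v w : Vc n) :
    herm n v w = v 0 * conj (w (Fin.last n)) + v (Fin.last n) * conj (w 0)
      + midOf n v ⬝ᵥ star (midOf n w) := by
  rw [herm_eq_sum_swap, sum_eq_first_add_last_add_sum_idx hn, Equiv.swap_apply_left,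
    Equiv.swap_apply_right]
  congr 1
  refine Finset.sum_congr rfl fun k _ => ?_
  rw [Equiv.swap_apply_of_ne_of_ne (idx_ne_zero k) (idx_ne_last k)]
  rfl

lemma herm_self_eq (n : ℕ) (hn : n ≠ 0) (z : Vc n) :
    herm n z z = z (Fin.last n) * conj (z 0) + star (z (Fin.last n) * conj (z 0))
      + midOf n z ⬝ᵥ star (midOf n z) := by
  rw [herm_eq n hn, star_mul', Complex.star_def, Complex.conj_conj, mul_comm (conj _)]
  ring

lemma Mz_eq (n : ℕ) (z : Vc n) :
    Mz n z = (z (Fin.last n) * conj (z 0)) • 1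
      + Matrix.vecMulVec (midOf n z) (star (midOf n z)) := by
  ext i j
  simp only [Mz, midOf, Matrix.add_apply, Matrix.smul_apply, Matrix.one_apply,
    Matrix.vecMulVec_apply, Pi.star_apply, smul_eq_mul, mul_ite, mul_one, mul_zero,
    Complex.star_def]

lemma Mz_mul_conjTranspose (n : ℕ) (hn : n ≠ 0) {z : Vc n} (hz : herm n z z = 0) :
    Mz n z * (Mz n z)ᴴ =
      (z (Fin.last n) * conj (z 0) * star (z (Fin.last n) * conj (z 0))) • 1 := by
  rw [Mz_eq]
  exact smul_one_add_vecMulVec_mul_conjTranspose _ _ (herm_self_eq n hn z ▸ hz)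

lemma embedMid_zero (n : ℕ) (u : Fin (n - 1) → ℂ) : embedMid n u 0 = 0 :=
  Finset.sum_eq_zero fun k _ => if_neg (idx_ne_zero k)

lemma embedMid_last (n : ℕ) (u : Fin (n - 1) → ℂ) : embedMid n u (Fin.last n) = 0 :=
  Finset.sum_eq_zero fun k _ => if_neg (idx_ne_last k)

lemma midOf_embedMid (n : ℕ) (u : Fin (n - 1) → ℂ) : midOf n (embedMid n u) = u := by
  funext k
  simp only [midOf, embedMid, idx_injective.eq_iff, Finset.sum_ite_eq', Finset.mem_univ,
    if_true]

lemma herm_embedMid (n : ℕ) (hn : n ≠ 0) (u : Fin (n - 1) → ℂ) (z : Vc n) :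
    herm n (embedMid n u) z = u ⬝ᵥ star (midOf n z) := by
  rw [herm_eq n hn, embedMid_zero, embedMid_last, midOf_embedMid, zero_mul, zero_mul,
    zero_add, zero_add]

open ComplexOrder in
lemma midOf_eq_zero_of_isotropic (n : ℕ) (hn : n ≠ 0) {z : Vc n} (hz : herm n z z = 0)
    (h : z (Fin.last n) * conj (z 0) = 0) : midOf n z = 0 := by
  rw [herm_self_eq n hn, h, star_zero, zero_add, zero_add] at hz
  exact dotProduct_self_star_eq_zero.mp hz

lemma eq_of_midOf_eq_zero (n : ℕ) (hn : n ≠ 0) {z : Vc n} (h : midOf n z = 0) :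
    z = z 0 • e1v n + z (Fin.last n) • eN1v n := by
  have h0last : (0 : Fin (n + 1)) ≠ Fin.last n := Fin.ne_of_val_ne (Ne.symm hn)
  funext i
  rcases eq_or_ne i 0 with rfl | h0
  · simp [e1v, eN1v, h0last]
  rcases eq_or_ne i (Fin.last n) with rfl | hlast
  · simp [e1v, eN1v, h0last.symm]
  obtain ⟨k, rfl⟩ := exists_idx_eq h0 hlast
  simpa [e1v, eN1v, h0, hlast, midOf] using congrFun h k

lemma last_ne_zero_of_mk_ne_e1pt (n : ℕ) (hn : n ≠ 0) {z : Vc n} (hz0 : z ≠ 0)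
    (hz : herm n z z = 0) (hne : Projectivization.mk ℂ z hz0 ≠ e1pt n) :
    z (Fin.last n) ≠ 0 := by
  intro hlast
  have hmid := midOf_eq_zero_of_isotropic n hn hz (by rw [hlast, zero_mul])
  apply hne
  rw [e1pt, Projectivization.mk_eq_mk_iff']
  have hz_eq := eq_of_midOf_eq_zero n hn hmid
  rw [hlast, zero_smul, add_zero] at hz_eq
  exact ⟨z 0, hz_eq.symm⟩

lemma first_ne_zero_of_mk_ne_eN1pt (n : ℕ) (hn : n ≠ 0) {z : Vc n} (hz0 : z ≠ 0)
    (hz : herm n z z = 0) (hne : Projectivization.mk ℂ z hz0 ≠ eN1pt n) :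
    z 0 ≠ 0 := by
  intro hfirst
  have hmid := midOf_eq_zero_of_isotropic n hn hz (by rw [hfirst, map_zero, mul_zero])
  apply hne
  rw [eN1pt, Projectivization.mk_eq_mk_iff']
  have hz_eq := eq_of_midOf_eq_zero n hn hmid
  rw [hfirst, zero_smul, zero_add] at hz_eq
  exact ⟨z (Fin.last n), hz_eq.symm⟩

/-- For `z ∈ ∂ℍⁿ_ℂ \\ {[e₁],[e_{n+1}]}` one has
`M_z M_z* = |z₁|²|z_{n+1}|² · I`; in particular `[[M_z]]` lies in `PU(n-1)` (a nonzero scalar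
multiple of `M_z` is unitary).  Moreover every point of `W_z = e₁^⊥ ∩ e_{n+1}^⊥ ∩ z^⊥`
(viewed in `ℙ^{n-2}_ℂ`) is a fixed point of `φ_z = [[M_z]]`. -/
theorem Mz_scalar_unitary_and_Wz_fixed
    (n : ℕ) (hn : 2 ≤ n) (zv : Vc n) (hzne : zv ≠ 0)
    (hbd : herm n zv zv = 0)
    (hz1 : Projectivization.mk ℂ zv hzne ≠ e1pt n)
    (hz2 : Projectivization.mk ℂ zv hzne ≠ eN1pt n) :
    (Mz n zv) * (Mz n zv)ᴴ =
      ((Complex.normSq (zv 0) : ℂ) * (Complex.normSq (zv (Fin.last n)) : ℂ)) •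
        (1 : Matrix (Fin (n - 1)) (Fin (n - 1)) ℂ) ∧
    (∃ c : ℂ, c ≠ 0 ∧ c • Mz n zv ∈ Matrix.unitaryGroup (Fin (n - 1)) ℂ) ∧
    (∀ u : Fin (n - 1) → ℂ, u ≠ 0 → herm n (embedMid n u) zv = 0 →
      ∃ c : ℂ, c ≠ 0 ∧ (Mz n zv).mulVec u = c • u) := by
  have hn0 : n ≠ 0 := by omega
  set a := zv (Fin.last n) * conj (zv 0) with ha_def
  have ha : a ≠ 0 := mul_ne_zero (last_ne_zero_of_mk_ne_e1pt n hn0 hzne hbd hz1)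
    ((map_ne_zero _).mpr (first_ne_zero_of_mk_ne_eN1pt n hn0 hzne hbd hz2))
  have hnormSq :
      (Complex.normSq (zv 0) : ℂ) * Complex.normSq (zv (Fin.last n)) = a * star a := by
    rw [Complex.star_def, Complex.mul_conj, ha_def, Complex.normSq_mul, Complex.normSq_conj,
      mul_comm, Complex.ofReal_mul]
  have hM := Mz_mul_conjTranspose n hn0 hbd
  refine ⟨hnormSq ▸ hM, ⟨a⁻¹, inv_ne_zero ha, inv_smul_mem_unitaryGroup ha hM⟩,
    fun u _ hu => ⟨a, ha, ?_⟩⟩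
  rw [Mz_eq]
  exact smul_one_add_vecMulVec_mulVec_of_dotProduct_eq_zero _ _ _
    (herm_embedMid n hn0 u zv ▸ hu)

end CKG
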